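/- arXiv:1711.03015 — 4 statements merged into one kernel-verified Lean document; each statement's English description precedes it below -/
import Mathlib

section
/- (Theorem of Hillen–Othmer, part (a).) Under assumptions (T1), (T2) and (T4), μ = 0 is an eigenvalue of the turning operator 𝓛 : L²(V) → L²(V) with eigenfunction f(v) ≡ 1, and it is geometrically simple: the kernel of 𝓛 is exactly the one-dimensional span of the constant function 1. -/
/-!
For a fixed point `q = 𝒯 q` of the nonnegative kernel, `|q| ≤ 𝒯 |q|` pointwise, and both sides
have the same integral because the columns of `T` integrate to 1; hence `|q| = 𝒯 |q|` a.e. On a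
row `v` where `T(v, ·) > 0` a.e. (such rows exist by the lower bound in (T2)) this is the equality
case of `|∫ T q| ≤ ∫ T |q|`, which forces `q` to have constant sign. Since the rows also integrate
to 1 (T4), every `q - t` is again a fixed point, so `q` lies a.e. on one side of every level `t`,
hence is a.e. constant.
-/

open MeasureTheory Filter Function

namespace MeasureTheory

variable {α β : Type*} [MeasurableSpace α] [MeasurableSpace β] {μ : Measure α} {ν : Measure β}

lemma exists_ae_le_of_forall_ae_le_or_ae_ge [NeZero μ] {p : α → ℝ}
    (h : ∀ t, (∀ᵐ x ∂μ, t ≤ p x) ∨ ∀ᵐ x ∂μ, p x ≤ t) : ∃ b, ∀ᵐ x ∂μ, p x ≤ b := by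
  by_contra hunbdd
  have hlarge : ∀ᵐ x ∂μ, ∀ k : ℕ, (k : ℝ) ≤ p x :=
    ae_all_iff.2 fun k => (h k).resolve_right fun hk => hunbdd ⟨k, hk⟩
  obtain ⟨x, hx⟩ := hlarge.exists
  obtain ⟨k, hk⟩ := exists_nat_gt (p x)
  exact (hx k).not_gt hk

lemma exists_ae_eq_const_of_forall_ae_le_or_ae_ge [NeZero μ] {p : α → ℝ}
    (h : ∀ t, (∀ᵐ x ∂μ, t ≤ p x) ∨ ∀ᵐ x ∂μ, p x ≤ t) : ∃ c, p =ᵐ[μ] fun _ => c := by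
  have hbdd : IsBoundedUnder (· ≤ ·) (ae μ) p := exists_ae_le_of_forall_ae_le_or_ae_ge h
  have hbdd' : IsBoundedUnder (· ≥ ·) (ae μ) p := by
    obtain ⟨b, hb⟩ := exists_ae_le_of_forall_ae_le_or_ae_ge (p := fun x => -p x)
      fun t => (h (-t)).symm.imp (fun ht => ht.mono fun x hx => by linarith)
        (fun ht => ht.mono fun x hx => by linarith)
    exact ⟨-b, hb.mono fun x hx => show -b ≤ p x by linarith⟩
  have hsup_le_inf : essSup p μ ≤ essInf p μ := by
    by_contra! hlt
    rcases h ((essInf p μ + essSup p μ) / 2) with ht | ht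
    · linarith [le_essInf_of_ae_le _ ht hbdd.isCoboundedUnder_flip]
    · linarith [essSup_le_of_ae_le _ ht hbdd'.isCoboundedUnder_flip]
  refine ⟨essSup p μ, ?_⟩
  filter_upwards [ae_le_essSup hbdd, ae_essInf_le hbdd'] with x hsup hinf
  linarith

lemma ae_memLp_two_of_integrable_sq [SFinite μ] [SFinite ν] {T : α → β → ℝ}
    (hT : Measurable (uncurry T))
    (hTsq : Integrable (fun z : α × β => T z.1 z.2 ^ 2) (μ.prod ν)) :
    ∀ᵐ v ∂μ, MemLp (T v) 2 ν := by
  filter_upwards [hTsq.prod_right_ae] with v hv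
  exact (memLp_two_iff_integrable_sq hT.of_uncurry_left.aestronglyMeasurable).2 hv

lemma frequently_ae_pos_of_mul_le [SFinite μ] [SFinite ν] {T : α → β → ℝ} {η : α → ℝ}
    {φ : β → ℝ}
    (hη : ∀ᵐ v ∂μ, 0 ≤ η v) (hη_ne : ¬ η =ᵐ[μ] 0) (hφ : ∀ᵐ v' ∂ν, 0 < φ v')
    (hlow : ∀ᵐ z ∂μ.prod ν, η z.1 * φ z.2 ≤ T z.1 z.2) :
    ∃ᵐ v ∂μ, ∀ᵐ v' ∂ν, 0 < T v v' := by
  have hη_pos : ∃ᵐ v ∂μ, 0 < η v := by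
    refine fun hle => hη_ne ?_
    filter_upwards [hle, hη] with v h1 h2 using le_antisymm (not_lt.1 h1) h2
  refine (hη_pos.and_eventually (Measure.ae_ae_of_ae_prod hlow)).mono fun v ⟨hv, hvlow⟩ => ?_
  filter_upwards [hvlow, hφ] with v' h1 h2 using (mul_pos hv h2).trans_le h1

lemma ae_nonneg_of_integral_mul_abs_eq {w q : α → ℝ} (hw : ∀ᵐ x ∂μ, 0 < w x)
    (hwq : Integrable (fun x => w x * q x) μ) (hwq' : Integrable (fun x => w x * |q x|) μ)
    (h : ∫ x, w x * |q x| ∂μ = ∫ x, w x * q x ∂μ) : ∀ᵐ x ∂μ, 0 ≤ q x := by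
  have hle : (fun x => w x * q x) ≤ᵐ[μ] fun x => w x * |q x| := by
    filter_upwards [hw] with x hx using mul_le_mul_of_nonneg_left (le_abs_self _) hx.le
  filter_upwards [(integral_eq_iff_of_ae_le hwq hwq' hle).1 h.symm, hw] with x hx hwx
  exact (abs_nonneg _).trans_eq (mul_left_cancel₀ hwx.ne' hx).symm

lemma abs_ae_eq_integral_mul_abs_of_ae_eq_integral_mul [IsFiniteMeasure μ] {T : α → α → ℝ}
    (hT : Measurable (uncurry T)) (hT_nonneg : ∀ᵐ z ∂μ.prod μ, 0 ≤ T z.1 z.2)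
    (hT_col : ∀ᵐ v' ∂μ, ∫ v, T v v' ∂μ = 1)
    (hTsq : Integrable (fun z : α × α => T z.1 z.2 ^ 2) (μ.prod μ))
    {q : α → ℝ} (hq : MemLp q 2 μ) (hfix : q =ᵐ[μ] fun v => ∫ v', T v v' * q v' ∂μ) :
    (fun v => |q v|) =ᵐ[μ] fun v => ∫ v', T v v' * |q v'| ∂μ := by
  have hprod : Integrable (fun z : α × α => T z.1 z.2 * |q z.2|) (μ.prod μ) :=
    ((memLp_two_iff_integrable_sq hT.aestronglyMeasurable).2 hTsq).integrable_mul
      (hq.abs.comp_snd μ)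
  have hle : (fun v => |q v|) ≤ᵐ[μ] fun v => ∫ v', T v v' * |q v'| ∂μ := by
    filter_upwards [hfix, Measure.ae_ae_of_ae_prod hT_nonneg] with v hv hnn
    calc |q v| = ‖∫ v', T v v' * q v' ∂μ‖ := by rw [hv, Real.norm_eq_abs]
      _ ≤ ∫ v', ‖T v v' * q v'‖ ∂μ := norm_integral_le_integral_norm _
      _ = ∫ v', T v v' * |q v'| ∂μ := integral_congr_ae <| by
        filter_upwards [hnn] with v' h
        rw [Real.norm_eq_abs, abs_mul, abs_of_nonneg h]
  have hint_eq : ∫ v, |q v| ∂μ = ∫ v, ∫ v', T v v' * |q v'| ∂μ ∂μ := by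
    rw [integral_integral_swap hprod]
    refine integral_congr_ae ?_
    filter_upwards [hT_col] with v' h
    rw [integral_mul_const, h, one_mul]
  exact (integral_eq_iff_of_ae_le (hq.abs.integrable one_le_two) hprod.integral_prod_left hle).1
    hint_eq

lemma ae_nonneg_or_ae_nonpos_of_ae_eq_integral_mul [IsFiniteMeasure μ] {T : α → α → ℝ}
    (hT : Measurable (uncurry T)) (hT_nonneg : ∀ᵐ z ∂μ.prod μ, 0 ≤ T z.1 z.2)
    (hT_col : ∀ᵐ v' ∂μ, ∫ v, T v v' ∂μ = 1)
    (hTsq : Integrable (fun z : α × α => T z.1 z.2 ^ 2) (μ.prod μ))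
    (hT_pos : ∃ᵐ v ∂μ, ∀ᵐ v' ∂μ, 0 < T v v')
    {q : α → ℝ} (hq : MemLp q 2 μ) (hfix : q =ᵐ[μ] fun v => ∫ v', T v v' * q v' ∂μ) :
    (∀ᵐ x ∂μ, 0 ≤ q x) ∨ ∀ᵐ x ∂μ, q x ≤ 0 := by
  obtain ⟨v, hv_pos, hv_abs, hv_fix, hv_sec⟩ := (hT_pos.and_eventually
    ((abs_ae_eq_integral_mul_abs_of_ae_eq_integral_mul hT hT_nonneg hT_col hTsq hq hfix).and
      (hfix.and (ae_memLp_two_of_integrable_sq hT hTsq)))).exists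
  have hint : Integrable (fun v' => T v v' * q v') μ := hv_sec.integrable_mul hq
  have hint_abs : Integrable (fun v' => T v v' * |q v'|) μ := hv_sec.integrable_mul hq.abs
  have hv_eq : ∫ v', T v v' * |q v'| ∂μ = |∫ v', T v v' * q v' ∂μ| :=
    hv_abs.symm.trans (congrArg abs hv_fix)
  rcases le_total 0 (∫ v', T v v' * q v' ∂μ) with h | h
  · exact .inl <| ae_nonneg_of_integral_mul_abs_eq hv_pos hint hint_abs <| by
      rw [hv_eq, abs_of_nonneg h]
  · refine .inr <| (ae_nonneg_of_integral_mul_abs_eq (q := fun x => -q x) hv_pos ?_ ?_ ?_).mono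
      fun x hx => neg_nonneg.1 hx
    · simp only [mul_neg]
      exact hint.neg
    · simpa only [abs_neg] using hint_abs
    · simp only [abs_neg, mul_neg, integral_neg]
      rw [hv_eq, abs_of_nonpos h]

lemma exists_ae_eq_const_of_ae_eq_integral_mul [IsFiniteMeasure μ] [NeZero μ] {T : α → α → ℝ}
    (hT : Measurable (uncurry T)) (hT_nonneg : ∀ᵐ z ∂μ.prod μ, 0 ≤ T z.1 z.2)
    (hT_col : ∀ᵐ v' ∂μ, ∫ v, T v v' ∂μ = 1)
    (hTsq : Integrable (fun z : α × α => T z.1 z.2 ^ 2) (μ.prod μ))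
    (hT_pos : ∃ᵐ v ∂μ, ∀ᵐ v' ∂μ, 0 < T v v') (hT_row : ∀ᵐ v ∂μ, ∫ v', T v v' ∂μ = 1)
    {p : α → ℝ} (hp : MemLp p 2 μ) (hfix : p =ᵐ[μ] fun v => ∫ v', T v v' * p v' ∂μ) :
    ∃ c, p =ᵐ[μ] fun _ => c := by
  refine exists_ae_eq_const_of_forall_ae_le_or_ae_ge fun t => ?_
  have hfix_t : (fun v => p v - t) =ᵐ[μ] fun v => ∫ v', T v v' * (p v' - t) ∂μ := by
    filter_upwards [hfix, ae_memLp_two_of_integrable_sq hT hTsq, hT_row] with v hv hsec hrow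
    have hTp : Integrable (fun v' => T v v' * p v') μ := hsec.integrable_mul hp
    have hTt : Integrable (fun v' => T v v' * t) μ := (hsec.integrable one_le_two).mul_const t
    simp only [mul_sub]
    rw [integral_sub hTp hTt, integral_mul_const, hrow, one_mul, ← hv]
  exact (ae_nonneg_or_ae_nonpos_of_ae_eq_integral_mul hT hT_nonneg hT_col hTsq hT_pos
    (hp.sub (memLp_const t)) hfix_t).imp (·.mono fun _ hv => sub_nonneg.1 hv)
    (·.mono fun _ hv => sub_nonpos.1 hv)

end MeasureTheory

theorem turning_operator_kernel_eq_span_one_general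
    (n : ℕ) (V : Set (EuclideanSpace ℝ (Fin n)))
    (hVc : IsCompact V) (hVpos : 0 < volume V)
    (T : EuclideanSpace ℝ (Fin n) → EuclideanSpace ℝ (Fin n) → ℝ)
    (hTmeas : Measurable (Function.uncurry T))
    -- (T1)
    (hT1_nonneg : ∀ᵐ z ∂((volume.restrict V).prod (volume.restrict V)), 0 ≤ T z.1 z.2)
    (hT1_norm : ∀ᵐ v' ∂(volume.restrict V), ∫ v in V, T v v' = 1)
    (hT1_sq : Integrable (fun z => (T z.1 z.2) ^ 2)
      ((volume.restrict V).prod (volume.restrict V)))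
    -- (T2)
    (η₀ φ ψ : EuclideanSpace ℝ (Fin n) → ℝ)
    (hη₀_nonneg : ∀ᵐ v ∂(volume.restrict V), 0 ≤ η₀ v)
    (hη₀_ne : ¬ (η₀ =ᵐ[volume.restrict V] 0))
    (hφ_pos : ∀ᵐ v ∂(volume.restrict V), 0 < φ v)
    (hT2 : ∀ᵐ z ∂((volume.restrict V).prod (volume.restrict V)),
      η₀ z.1 * φ z.2 ≤ T z.1 z.2 ∧ T z.1 z.2 ≤ η₀ z.1 * ψ z.2)
    -- (T4)
    (hT4 : ∀ᵐ v ∂(volume.restrict V), ∫ v' in V, T v v' = 1)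
    -- the integral operator 𝒯 and the turning operator 𝓛
    (𝒯 𝓛 : Lp ℝ 2 (volume.restrict V) →L[ℝ] Lp ℝ 2 (volume.restrict V))
    (h𝒯 : ∀ p : Lp ℝ 2 (volume.restrict V),
      (𝒯 p : EuclideanSpace ℝ (Fin n) → ℝ) =ᵐ[volume.restrict V]
        fun v => ∫ v' in V, T v v' * p v')
    (lam : ℝ) (hlam : 0 < lam)
    (h𝓛 : 𝓛 = lam • (𝒯 - ContinuousLinearMap.id ℝ (Lp ℝ 2 (volume.restrict V))))
    -- the constant function 1 as an element of L²(V)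
    (one : Lp ℝ 2 (volume.restrict V))
    (hone : (one : EuclideanSpace ℝ (Fin n) → ℝ) =ᵐ[volume.restrict V] fun _ => 1) :
    𝓛 one = 0 ∧ LinearMap.ker (𝓛 : Lp ℝ 2 (volume.restrict V) →ₗ[ℝ] Lp ℝ 2 (volume.restrict V)) = Submodule.span ℝ {one} := by
  have : IsFiniteMeasure (volume.restrict V) := isFiniteMeasure_restrict.2 hVc.measure_lt_top.ne
  have : NeZero (volume.restrict V) := ⟨by simpa [Measure.restrict_eq_zero] using hVpos.ne'⟩
  have hker : ∀ f, 𝓛 f = 0 ↔ 𝒯 f = f := fun f => by simp [h𝓛, hlam.ne', sub_eq_zero]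
  have h𝒯one : 𝒯 one = one := by
    have hTone : (fun v => ∫ v' in V, T v v' * one v') =ᵐ[volume.restrict V] fun _ => 1 := by
      filter_upwards [hT4] with v hv
      rw [← hv]
      exact integral_congr_ae (hone.mono fun v' h => by simp only [h, mul_one])
    exact Lp.ext ((h𝒯 one).trans (hTone.trans hone.symm))
  refine ⟨(hker one).2 h𝒯one, le_antisymm (fun f hf => ?_) ?_⟩
  · have hfix := h𝒯 f
    rw [(hker f).1 hf] at hfix
    obtain ⟨c, hc⟩ := exists_ae_eq_const_of_ae_eq_integral_mul hTmeas hT1_nonneg hT1_norm hT1_sq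
      (frequently_ae_pos_of_mul_le hη₀_nonneg hη₀_ne hφ_pos (hT2.mono fun _ h => h.1)) hT4
      (Lp.memLp f) hfix
    have hf_eq : f = c • one := Lp.ext <| hc.trans <| by
      filter_upwards [Lp.coeFn_smul c one, hone] with v h1 h2
      rw [h1, Pi.smul_apply, h2, smul_eq_mul, mul_one]
    exact Submodule.mem_span_singleton.2 ⟨c, hf_eq.symm⟩
  · exact (Submodule.span_singleton_le_iff_mem _ _).2 ((hker one).2 h𝒯one)

/-- (Hillen–Othmer, part (a).) Under (T1), (T2) and (T4), `0` is an eigenvalue of the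
turning operator `𝓛` with eigenfunction the constant `1`, and it is geometrically simple:
the kernel of `𝓛` is exactly the span of the constant function `1`. -/
theorem turning_operator_kernel_eq_span_one
    (n : ℕ) (V : Set (EuclideanSpace ℝ (Fin n)))
    (hVc : IsCompact V) (hVpos : 0 < volume V)
    (T : EuclideanSpace ℝ (Fin n) → EuclideanSpace ℝ (Fin n) → ℝ)
    (hTmeas : Measurable (Function.uncurry T))
    -- (T1)
    (hT1_nonneg : ∀ᵐ z ∂((volume.restrict V).prod (volume.restrict V)), 0 ≤ T z.1 z.2)
    (hT1_norm : ∀ᵐ v' ∂(volume.restrict V), ∫ v in V, T v v' = 1)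
    (hT1_sq : Integrable (fun z => (T z.1 z.2) ^ 2)
      ((volume.restrict V).prod (volume.restrict V)))
    -- (T2)
    (η₀ φ ψ : EuclideanSpace ℝ (Fin n) → ℝ)
    (hη₀ : MemLp η₀ 2 (volume.restrict V)) (hφ : MemLp φ 2 (volume.restrict V))
    (hψ : MemLp ψ 2 (volume.restrict V))
    (hη₀_nonneg : ∀ᵐ v ∂(volume.restrict V), 0 ≤ η₀ v)
    (hη₀_ne : ¬ (η₀ =ᵐ[volume.restrict V] 0))
    (hφ_pos : ∀ᵐ v ∂(volume.restrict V), 0 < φ v)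
    (hψ_pos : ∀ᵐ v ∂(volume.restrict V), 0 < ψ v)
    (hT2 : ∀ᵐ z ∂((volume.restrict V).prod (volume.restrict V)),
      η₀ z.1 * φ z.2 ≤ T z.1 z.2 ∧ T z.1 z.2 ≤ η₀ z.1 * ψ z.2)
    -- (T4)
    (hT4 : ∀ᵐ v ∂(volume.restrict V), ∫ v' in V, T v v' = 1)
    -- the integral operator 𝒯 and the turning operator 𝓛
    (𝒯 𝓛 : Lp ℝ 2 (volume.restrict V) →L[ℝ] Lp ℝ 2 (volume.restrict V))
    (h𝒯 : ∀ p : Lp ℝ 2 (volume.restrict V),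
      (𝒯 p : EuclideanSpace ℝ (Fin n) → ℝ) =ᵐ[volume.restrict V]
        fun v => ∫ v' in V, T v v' * p v')
    (lam : ℝ) (hlam : 0 < lam)
    (h𝓛 : 𝓛 = lam • (𝒯 - ContinuousLinearMap.id ℝ (Lp ℝ 2 (volume.restrict V))))
    -- the constant function 1 as an element of L²(V)
    (one : Lp ℝ 2 (volume.restrict V))
    (hone : (one : EuclideanSpace ℝ (Fin n) → ℝ) =ᵐ[volume.restrict V] fun _ => 1) :
    𝓛 one = 0 ∧ LinearMap.ker (𝓛 : Lp ℝ 2 (volume.restrict V) →ₗ[ℝ] Lp ℝ 2 (volume.restrict V)) = Submodule.span ℝ {one} :=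
  turning_operator_kernel_eq_span_one_general n V hVc hVpos T hTmeas hT1_nonneg hT1_norm hT1_sq η₀ φ
    ψ hη₀_nonneg hη₀_ne hφ_pos hT2 hT4 𝒯 𝓛 h𝒯 lam hlam h𝓛 one hone
end

section
/- (Theorem of Hillen–Othmer, part (c).) Under assumptions (T1), (T2), (T3) and (T4), every nonzero eigenvalue μ ∈ ℂ of (the complexification of) the turning operator 𝓛 on L²(V;ℂ) satisfies -2λ < Re μ ≤ -μ₂ < 0, where μ₂ = λ(1 - ‖𝒯‖_{⟨1⟩⊥→⟨1⟩⊥}); moreover, to within scalar multiples the constant function 1 is the only eigenfunction of 𝓛 that is nonnegative a.e. and not a.e. zero. -/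
/-!
Since the columns of `T` integrate to one, `𝒯` preserves integrals. Hence an eigenfunction of
`𝒯` or of its complexification with eigenvalue `w ≠ 1` has mean zero, so its real and imaginary
parts lie in `⟨1⟩⊥`, where (T3) gives `‖w‖ ≤ ‖𝒯K‖ < 1`; the bounds on `Re z` follow from
`z = λ (w - 1)`. A nonnegative eigenfunction that is not a.e. zero has nonzero mean, so its
eigenvalue is `w = 1`; as `𝒯 1 = 1` by (T4), its component orthogonal to `1` is again fixed by `𝒯`,
hence zero by (T3).
-/

open MeasureTheory
open scoped RealInnerProductSpace

section Hilbert

variable {𝕜 E : Type*} [RCLike 𝕜] [NormedAddCommGroup E] [InnerProductSpace 𝕜 E]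

theorem ContinuousLinearMap.norm_apply_le_norm_restrict_mul (A : E →L[𝕜] E) (K : Submodule 𝕜 E)
    (hK : ∀ x : K, A x ∈ K) {x : E} (hx : x ∈ K) :
    ‖A x‖ ≤ ‖(A.comp K.subtypeL).codRestrict K hK‖ * ‖x‖ :=
  ((A.comp K.subtypeL).codRestrict K hK).le_opNorm ⟨x, hx⟩

theorem mem_span_singleton_of_apply_eq_self {A : E →L[𝕜] E} {e x : E} (he : A e = e)
    (hx : A x = x) {c : ℝ} (hc : c < 1) (hA : ∀ k ∈ (𝕜 ∙ e)ᗮ, ‖A k‖ ≤ c * ‖k‖) :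
    x ∈ 𝕜 ∙ e := by
  set y := (𝕜 ∙ e).starProjection x with hy
  obtain ⟨a, hay⟩ := Submodule.mem_span_singleton.mp ((𝕜 ∙ e).starProjection_apply_mem x)
  have hfix : A (x - y) = x - y := by rw [map_sub, hx, hy, ← hay, map_smul, he]
  have hle := hA _ (Submodule.sub_starProjection_mem_orthogonal x)
  rw [hfix] at hle
  have hxy : x - y = 0 := norm_le_zero_iff.mp (by nlinarith [norm_nonneg (x - y)])
  rw [sub_eq_zero.mp hxy]
  exact (𝕜 ∙ e).starProjection_apply_mem x

end Hilbert

theorem apply_eq_smul_of_smul_sub_eq_smul {𝕜 E : Type*} [Field 𝕜] [AddCommGroup E] [Module 𝕜 E]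
    {c z : 𝕜} (hc : c ≠ 0) {x y : E} (h : c • (y - x) = z • x) : y = (1 + z / c) • x := by
  rw [add_smul, one_smul, div_eq_inv_mul, mul_smul, ← h, smul_smul, inv_mul_cancel₀ hc, one_smul,
    add_sub_cancel]

theorem re_mul_sub_one_bounds_of_norm_le {lam c : ℝ} (hlam : 0 < lam) (hc : c < 1) {w : ℂ}
    (hw : ‖w‖ ≤ c) :
    -2 * lam < (lam * (w - 1)).re ∧ (lam * (w - 1)).re ≤ -(lam * (1 - c)) := by
  have hre := abs_le.mp ((Complex.abs_re_le_norm w).trans hw)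
  simp only [Complex.mul_re, Complex.ofReal_re, Complex.ofReal_im, Complex.sub_re, Complex.one_re,
    zero_mul, sub_zero]
  constructor <;> nlinarith

namespace MeasureTheory.L2

variable {α : Type*} [MeasurableSpace α] {μ : Measure α}

theorem mem_orthogonal_singleton_iff_integral_eq_zero {one : Lp ℝ 2 μ}
    (hone : one =ᵐ[μ] fun _ => 1) (f : Lp ℝ 2 μ) : f ∈ (ℝ ∙ one)ᗮ ↔ ∫ v, f v ∂μ = 0 := by
  rw [Submodule.mem_orthogonal_singleton_iff_inner_right, L2.inner_def]
  refine Eq.congr_left (integral_congr_ae ?_)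
  filter_upwards [hone] with v hv
  simp [hv]

theorem norm_sq_eq_norm_re_sq_add_norm_im_sq (q : Lp ℂ 2 μ) :
    ‖q‖ ^ 2 = ‖Complex.reCLM.compLp q‖ ^ 2 + ‖Complex.imCLM.compLp q‖ ^ 2 := by
  rw [← inner_self_eq_norm_sq (𝕜 := ℂ), ← real_inner_self_eq_norm_sq,
    ← real_inner_self_eq_norm_sq, L2.inner_def, L2.inner_def, L2.inner_def,
    ← integral_re (L2.integrable_inner q q),
    ← integral_add (L2.integrable_inner _ _) (L2.integrable_inner _ _)]
  refine integral_congr_ae ?_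
  filter_upwards [Complex.reCLM.coeFn_compLp' q, Complex.imCLM.coeFn_compLp' q] with v hre him
  simp [hre, him, sq, Complex.norm_mul_self_eq_normSq, Complex.normSq_apply]

theorem norm_apply_le_of_compLp_re_im {A : Lp ℝ 2 μ →L[ℝ] Lp ℝ 2 μ}
    {Ac : Lp ℂ 2 μ →L[ℂ] Lp ℂ 2 μ} {p : Lp ℂ 2 μ}
    (hre : A (Complex.reCLM.compLp p) = Complex.reCLM.compLp (Ac p))
    (him : A (Complex.imCLM.compLp p) = Complex.imCLM.compLp (Ac p))
    {K : Submodule ℝ (Lp ℝ 2 μ)} {c : ℝ} (hc : 0 ≤ c) (hA : ∀ f ∈ K, ‖A f‖ ≤ c * ‖f‖)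
    (hpre : Complex.reCLM.compLp p ∈ K) (hpim : Complex.imCLM.compLp p ∈ K) :
    ‖Ac p‖ ≤ c * ‖p‖ := by
  have hsq : ‖Ac p‖ ^ 2 ≤ (c * ‖p‖) ^ 2 := by
    rw [norm_sq_eq_norm_re_sq_add_norm_im_sq, mul_pow, norm_sq_eq_norm_re_sq_add_norm_im_sq,
      ← hre, ← him, mul_add, ← mul_pow, ← mul_pow]
    gcongr
    exacts [hA _ hpre, hA _ hpim]
  exact (pow_le_pow_iff_left₀ (norm_nonneg _) (by positivity) two_ne_zero).mp hsq

theorem integral_eq_zero_of_apply_eq_smul {𝕜 : Type*} [RCLike 𝕜]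
    {A : Lp 𝕜 2 μ →L[𝕜] Lp 𝕜 2 μ} (hA : ∀ f, ∫ v, A f v ∂μ = ∫ v, f v ∂μ) {f : Lp 𝕜 2 μ}
    {w : 𝕜} (hf : A f = w • f) (hw : w ≠ 1) : ∫ v, f v ∂μ = 0 := by
  have h : ∫ v, A f v ∂μ = w * ∫ v, f v ∂μ := by
    rw [hf, integral_congr_ae (Lp.coeFn_smul w f), Pi.smul_def, integral_smul, smul_eq_mul]
  rw [hA] at h
  by_contra h0
  exact hw (mul_right_cancel₀ h0 (h.symm.trans (one_mul _).symm))

theorem integral_compLp_eq_zero [IsFiniteMeasure μ] {E F : Type*} [NormedAddCommGroup E]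
    [NormedSpace ℝ E] [CompleteSpace E] [NormedAddCommGroup F] [NormedSpace ℝ F]
    [CompleteSpace F] (L : E →L[ℝ] F) {f : Lp E 2 μ} (hf : ∫ v, f v ∂μ = 0) :
    ∫ v, L.compLp f v ∂μ = 0 := by
  rw [L.integral_compLp, L.integral_comp_comm ((Lp.memLp f).integrable one_le_two), hf, map_zero]

end MeasureTheory.L2

section Kernel

variable {α : Type*} [MeasurableSpace α] {μ : Measure α} {T : α → α → ℝ}

theorem kernel_apply_eq_self_of_coeFn_eq_one {A : Lp ℝ 2 μ →L[ℝ] Lp ℝ 2 μ}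
    (hA : ∀ f : Lp ℝ 2 μ, A f =ᵐ[μ] fun v => ∫ v', T v v' * f v' ∂μ)
    (hTrow : ∀ᵐ v ∂μ, ∫ v', T v v' ∂μ = 1) {one : Lp ℝ 2 μ} (hone : one =ᵐ[μ] fun _ => 1) :
    A one = one := by
  apply Lp.ext
  filter_upwards [hA one, hTrow, hone] with v hAv hv hone_v
  rw [hAv, hone_v, ← hv]
  refine integral_congr_ae ?_
  filter_upwards [hone] with v' hv'
  rw [hv', mul_one]

variable [IsFiniteMeasure μ]

theorem integrable_kernel_smul {E : Type*} [NormedAddCommGroup E] [NormedSpace ℝ E]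
    (hT : Measurable (Function.uncurry T)) (hTsq : Integrable (fun z => T z.1 z.2 ^ 2) (μ.prod μ))
    {f : α → E} (hf : MemLp f 2 μ) :
    Integrable (fun z : α × α => T z.1 z.2 • f z.2) (μ.prod μ) := by
  have hT2 : MemLp (fun z : α × α => T z.1 z.2) 2 (μ.prod μ) :=
    (memLp_two_iff_integrable_sq hT.aestronglyMeasurable).mpr hTsq
  exact memLp_one_iff_integrable.mp <| (hf.comp_snd μ).smul hT2
    (hpqr := ⟨by norm_num [ENNReal.inv_two_add_inv_two]⟩)

theorem integral_integral_kernel_smul {E : Type*} [NormedAddCommGroup E] [NormedSpace ℝ E]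
    [CompleteSpace E] (hT : Measurable (Function.uncurry T))
    (hTsq : Integrable (fun z => T z.1 z.2 ^ 2) (μ.prod μ))
    (hTcol : ∀ᵐ v' ∂μ, ∫ v, T v v' ∂μ = 1) {f : α → E} (hf : MemLp f 2 μ) :
    ∫ v, ∫ v', T v v' • f v' ∂μ ∂μ = ∫ v', f v' ∂μ := by
  rw [integral_integral_swap (integrable_kernel_smul hT hTsq hf)]
  refine integral_congr_ae ?_
  filter_upwards [hTcol] with v' hv'
  rw [integral_smul_const, hv', one_smul]

theorem kernel_compLp_comm (hT : Measurable (Function.uncurry T))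
    (hTsq : Integrable (fun z => T z.1 z.2 ^ 2) (μ.prod μ))
    {A : Lp ℝ 2 μ →L[ℝ] Lp ℝ 2 μ} {Ac : Lp ℂ 2 μ →L[ℂ] Lp ℂ 2 μ}
    (hA : ∀ f : Lp ℝ 2 μ, A f =ᵐ[μ] fun v => ∫ v', T v v' * f v' ∂μ)
    (hAc : ∀ p : Lp ℂ 2 μ, Ac p =ᵐ[μ] fun v => ∫ v', (T v v' : ℂ) * p v' ∂μ)
    (L : ℂ →L[ℝ] ℝ) (p : Lp ℂ 2 μ) : A (L.compLp p) = L.compLp (Ac p) := by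
  have hsec : ∀ᵐ v ∂μ, Integrable (fun v' => T v v' • p v') μ :=
    (integrable_kernel_smul hT hTsq (Lp.memLp p)).prod_right_ae
  apply Lp.ext
  filter_upwards [hA (L.compLp p), hAc p, L.coeFn_compLp' (Ac p), hsec] with v hAv hAcv hLv hv
  rw [hAv, hLv, hAcv]
  simp_rw [← Complex.real_smul]
  rw [← L.integral_comp_comm hv]
  refine integral_congr_ae ?_
  filter_upwards [L.coeFn_compLp' p] with v' hv'
  rw [hv', map_smul, smul_eq_mul]

theorem integral_kernel_apply {𝕜 : Type*} [RCLike 𝕜] (hT : Measurable (Function.uncurry T))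
    (hTsq : Integrable (fun z => T z.1 z.2 ^ 2) (μ.prod μ))
    (hTcol : ∀ᵐ v' ∂μ, ∫ v, T v v' ∂μ = 1) {A : Lp 𝕜 2 μ →L[𝕜] Lp 𝕜 2 μ}
    (hA : ∀ f : Lp 𝕜 2 μ, A f =ᵐ[μ] fun v => ∫ v', (T v v' : 𝕜) * f v' ∂μ) (f : Lp 𝕜 2 μ) :
    ∫ v, A f v ∂μ = ∫ v, f v ∂μ :=
  (integral_congr_ae (hA f)).trans <| by
    simpa only [RCLike.real_smul_eq_coe_mul] using
      integral_integral_kernel_smul hT hTsq hTcol (Lp.memLp f)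

theorem norm_le_of_kernel_apply_eq_smul_of_ne_one (hT : Measurable (Function.uncurry T))
    (hTsq : Integrable (fun z => T z.1 z.2 ^ 2) (μ.prod μ))
    (hTcol : ∀ᵐ v' ∂μ, ∫ v, T v v' ∂μ = 1)
    {A : Lp ℝ 2 μ →L[ℝ] Lp ℝ 2 μ} {Ac : Lp ℂ 2 μ →L[ℂ] Lp ℂ 2 μ}
    (hA : ∀ f : Lp ℝ 2 μ, A f =ᵐ[μ] fun v => ∫ v', T v v' * f v' ∂μ)
    (hAc : ∀ p : Lp ℂ 2 μ, Ac p =ᵐ[μ] fun v => ∫ v', (T v v' : ℂ) * p v' ∂μ)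
    {one : Lp ℝ 2 μ} (hone : one =ᵐ[μ] fun _ => 1) {c : ℝ} (hc : 0 ≤ c)
    (hAK : ∀ f ∈ (ℝ ∙ one)ᗮ, ‖A f‖ ≤ c * ‖f‖) {p : Lp ℂ 2 μ} (hp : p ≠ 0) {w : ℂ}
    (hw : Ac p = w • p) (hw1 : w ≠ 1) : ‖w‖ ≤ c := by
  have hp_mean : ∫ v, p v ∂μ = 0 :=
    L2.integral_eq_zero_of_apply_eq_smul (integral_kernel_apply hT hTsq hTcol hAc) hw hw1
  have hbound : ‖Ac p‖ ≤ c * ‖p‖ :=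
    L2.norm_apply_le_of_compLp_re_im (kernel_compLp_comm hT hTsq hA hAc _ p)
      (kernel_compLp_comm hT hTsq hA hAc _ p) hc hAK
      ((L2.mem_orthogonal_singleton_iff_integral_eq_zero hone _).mpr
        (L2.integral_compLp_eq_zero _ hp_mean))
      ((L2.mem_orthogonal_singleton_iff_integral_eq_zero hone _).mpr
        (L2.integral_compLp_eq_zero _ hp_mean))
  rw [hw, norm_smul] at hbound
  exact le_of_mul_le_mul_right hbound (norm_pos_iff.mpr hp)

theorem exists_eq_smul_of_kernel_apply_eq_smul_of_nonneg (hT : Measurable (Function.uncurry T))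
    (hTsq : Integrable (fun z => T z.1 z.2 ^ 2) (μ.prod μ))
    (hTcol : ∀ᵐ v' ∂μ, ∫ v, T v v' ∂μ = 1) (hTrow : ∀ᵐ v ∂μ, ∫ v', T v v' ∂μ = 1)
    {A : Lp ℝ 2 μ →L[ℝ] Lp ℝ 2 μ}
    (hA : ∀ f : Lp ℝ 2 μ, A f =ᵐ[μ] fun v => ∫ v', T v v' * f v' ∂μ)
    {one : Lp ℝ 2 μ} (hone : one =ᵐ[μ] fun _ => 1) {c : ℝ} (hc : c < 1)
    (hAK : ∀ f ∈ (ℝ ∙ one)ᗮ, ‖A f‖ ≤ c * ‖f‖) {f : Lp ℝ 2 μ} {w : ℝ} (hf : A f = w • f)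
    (hf_nonneg : ∀ᵐ v ∂μ, 0 ≤ f v) (hf_ne : ¬ (f : α → ℝ) =ᵐ[μ] 0) :
    ∃ a : ℝ, f = a • one := by
  have hw : w = 1 := by
    by_contra hne
    exact hf_ne <| (integral_eq_zero_iff_of_nonneg_ae hf_nonneg
      ((Lp.memLp f).integrable one_le_two)).mp
      (L2.integral_eq_zero_of_apply_eq_smul (integral_kernel_apply hT hTsq hTcol hA) hf hne)
  rw [hw, one_smul] at hf
  obtain ⟨a, ha⟩ := Submodule.mem_span_singleton.mp <| mem_span_singleton_of_apply_eq_self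
    (kernel_apply_eq_self_of_coeFn_eq_one hA hTrow hone) hf hc hAK
  exact ⟨a, ha.symm⟩

end Kernel

theorem turning_operator_spectral_gap_and_positive_eigenfunction_general
    (n : ℕ) (V : Set (EuclideanSpace ℝ (Fin n)))
    (hVc : IsCompact V)
    (T : EuclideanSpace ℝ (Fin n) → EuclideanSpace ℝ (Fin n) → ℝ)
    (hTmeas : Measurable (Function.uncurry T))
    -- (T1)
    (hT1_norm : ∀ᵐ v' ∂(volume.restrict V), ∫ v in V, T v v' = 1)
    (hT1_sq : Integrable (fun z => (T z.1 z.2) ^ 2)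
      ((volume.restrict V).prod (volume.restrict V)))
    -- (T4)
    (hT4 : ∀ᵐ v ∂(volume.restrict V), ∫ v' in V, T v v' = 1)
    -- the real integral operator 𝒯 and turning operator 𝓛
    (𝒯 𝓛 : Lp ℝ 2 (volume.restrict V) →L[ℝ] Lp ℝ 2 (volume.restrict V))
    (h𝒯 : ∀ p : Lp ℝ 2 (volume.restrict V),
      (𝒯 p : EuclideanSpace ℝ (Fin n) → ℝ) =ᵐ[volume.restrict V]
        fun v => ∫ v' in V, T v v' * p v')
    (lam : ℝ) (hlam : 0 < lam)
    (h𝓛 : 𝓛 = lam • (𝒯 - ContinuousLinearMap.id ℝ (Lp ℝ 2 (volume.restrict V))))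
    -- the complexifications on L²(V;ℂ)
    (𝒯c 𝓛c : Lp ℂ 2 (volume.restrict V) →L[ℂ] Lp ℂ 2 (volume.restrict V))
    (h𝒯c : ∀ p : Lp ℂ 2 (volume.restrict V),
      (𝒯c p : EuclideanSpace ℝ (Fin n) → ℂ) =ᵐ[volume.restrict V]
        fun v => ∫ v' in V, (T v v' : ℂ) * p v')
    (h𝓛c : 𝓛c = (lam : ℂ) • (𝒯c - ContinuousLinearMap.id ℂ (Lp ℂ 2 (volume.restrict V))))
    -- the constant function 1 as an element of L²(V)
    (one : Lp ℝ 2 (volume.restrict V))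
    (hone : (one : EuclideanSpace ℝ (Fin n) → ℝ) =ᵐ[volume.restrict V] fun _ => 1)
    -- by (T1), 𝒯 maps ⟨1⟩⊥ into itself; 𝒯K is the restriction of 𝒯 to ⟨1⟩⊥
    (hinv : ∀ p ∈ (Submodule.span ℝ {one})ᗮ, 𝒯 p ∈ (Submodule.span ℝ {one})ᗮ)
    (𝒯K : (Submodule.span ℝ {one})ᗮ →L[ℝ] (Submodule.span ℝ {one})ᗮ)
    (h𝒯K : 𝒯K = ContinuousLinearMap.codRestrict
      (𝒯.comp (Submodule.span ℝ {one})ᗮ.subtypeL) (Submodule.span ℝ {one})ᗮ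
      (fun x => hinv x x.2))
    -- (T3)
    (hT3 : ‖𝒯K‖ < 1) :
    (0 < lam * (1 - ‖𝒯K‖)) ∧
    (∀ z : ℂ, z ≠ 0 →
      (∃ p : Lp ℂ 2 (volume.restrict V), p ≠ 0 ∧ 𝓛c p = z • p) →
      -2 * lam < z.re ∧ z.re ≤ -(lam * (1 - ‖𝒯K‖))) ∧
    (∀ (r : ℝ) (f : Lp ℝ 2 (volume.restrict V)), 𝓛 f = r • f →
      (∀ᵐ v ∂(volume.restrict V), 0 ≤ (f : EuclideanSpace ℝ (Fin n) → ℝ) v) →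
      ¬ ((f : EuclideanSpace ℝ (Fin n) → ℝ) =ᵐ[volume.restrict V] 0) →
      ∃ c : ℝ, f = c • one) := by
  have : IsFiniteMeasure (volume.restrict V) :=
    isFiniteMeasure_restrict.mpr hVc.measure_lt_top.ne
  have h𝒯K_le : ∀ f ∈ (ℝ ∙ one)ᗮ, ‖𝒯 f‖ ≤ ‖𝒯K‖ * ‖f‖ := fun f hf => by
    rw [h𝒯K]
    exact 𝒯.norm_apply_le_norm_restrict_mul _ _ hf
  refine ⟨mul_pos hlam (by linarith), ?_, ?_⟩
  · rintro z hz ⟨p, hp0, hp⟩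
    have hlamC : (lam : ℂ) ≠ 0 := Complex.ofReal_ne_zero.mpr hlam.ne'
    have hw : 𝒯c p = (1 + z / lam) • p :=
      apply_eq_smul_of_smul_sub_eq_smul hlamC (by
        simpa only [h𝓛c, smul_apply, sub_apply, ContinuousLinearMap.id_apply] using hp)
    have hz_eq : z = lam * ((1 + z / lam) - 1) := by field_simp; ring
    rw [hz_eq]
    exact re_mul_sub_one_bounds_of_norm_le hlam hT3 <|
      norm_le_of_kernel_apply_eq_smul_of_ne_one hTmeas hT1_sq hT1_norm h𝒯 h𝒯c hone
        (norm_nonneg 𝒯K) h𝒯K_le hp0 hw (by simpa [hlamC] using hz)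
  · intro r f hf hf_nonneg hf_ne
    have hw : 𝒯 f = (1 + r / lam) • f :=
      apply_eq_smul_of_smul_sub_eq_smul hlam.ne' (by
        simpa only [h𝓛, smul_apply, sub_apply, ContinuousLinearMap.id_apply] using hf)
    exact exists_eq_smul_of_kernel_apply_eq_smul_of_nonneg hTmeas hT1_sq hT1_norm hT4 h𝒯 hone
      hT3 h𝒯K_le hw hf_nonneg hf_ne

/-- (Hillen–Othmer, part (c).) Under (T1)–(T4), every nonzero eigenvalue `z ∈ ℂ` of the
complexification of the turning operator `𝓛` satisfies `-2λ < Re z ≤ -μ₂ < 0`, and, up to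
scalar multiples, the constant `1` is the only a.e. nonnegative, not a.e. zero eigenfunction
of `𝓛`. -/
theorem turning_operator_spectral_gap_and_positive_eigenfunction
    (n : ℕ) (V : Set (EuclideanSpace ℝ (Fin n)))
    (hVc : IsCompact V) (hVpos : 0 < volume V)
    (T : EuclideanSpace ℝ (Fin n) → EuclideanSpace ℝ (Fin n) → ℝ)
    (hTmeas : Measurable (Function.uncurry T))
    -- (T1)
    (hT1_nonneg : ∀ᵐ z ∂((volume.restrict V).prod (volume.restrict V)), 0 ≤ T z.1 z.2)
    (hT1_norm : ∀ᵐ v' ∂(volume.restrict V), ∫ v in V, T v v' = 1)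
    (hT1_sq : Integrable (fun z => (T z.1 z.2) ^ 2)
      ((volume.restrict V).prod (volume.restrict V)))
    -- (T2)
    (η₀ φ ψ : EuclideanSpace ℝ (Fin n) → ℝ)
    (hη₀ : MemLp η₀ 2 (volume.restrict V)) (hφ : MemLp φ 2 (volume.restrict V))
    (hψ : MemLp ψ 2 (volume.restrict V))
    (hη₀_nonneg : ∀ᵐ v ∂(volume.restrict V), 0 ≤ η₀ v)
    (hη₀_ne : ¬ (η₀ =ᵐ[volume.restrict V] 0))
    (hφ_pos : ∀ᵐ v ∂(volume.restrict V), 0 < φ v)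
    (hψ_pos : ∀ᵐ v ∂(volume.restrict V), 0 < ψ v)
    (hT2 : ∀ᵐ z ∂((volume.restrict V).prod (volume.restrict V)),
      η₀ z.1 * φ z.2 ≤ T z.1 z.2 ∧ T z.1 z.2 ≤ η₀ z.1 * ψ z.2)
    -- (T4)
    (hT4 : ∀ᵐ v ∂(volume.restrict V), ∫ v' in V, T v v' = 1)
    -- the real integral operator 𝒯 and turning operator 𝓛
    (𝒯 𝓛 : Lp ℝ 2 (volume.restrict V) →L[ℝ] Lp ℝ 2 (volume.restrict V))
    (h𝒯 : ∀ p : Lp ℝ 2 (volume.restrict V),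
      (𝒯 p : EuclideanSpace ℝ (Fin n) → ℝ) =ᵐ[volume.restrict V]
        fun v => ∫ v' in V, T v v' * p v')
    (lam : ℝ) (hlam : 0 < lam)
    (h𝓛 : 𝓛 = lam • (𝒯 - ContinuousLinearMap.id ℝ (Lp ℝ 2 (volume.restrict V))))
    -- the complexifications on L²(V;ℂ)
    (𝒯c 𝓛c : Lp ℂ 2 (volume.restrict V) →L[ℂ] Lp ℂ 2 (volume.restrict V))
    (h𝒯c : ∀ p : Lp ℂ 2 (volume.restrict V),
      (𝒯c p : EuclideanSpace ℝ (Fin n) → ℂ) =ᵐ[volume.restrict V]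
        fun v => ∫ v' in V, (T v v' : ℂ) * p v')
    (h𝓛c : 𝓛c = (lam : ℂ) • (𝒯c - ContinuousLinearMap.id ℂ (Lp ℂ 2 (volume.restrict V))))
    -- the constant function 1 as an element of L²(V)
    (one : Lp ℝ 2 (volume.restrict V))
    (hone : (one : EuclideanSpace ℝ (Fin n) → ℝ) =ᵐ[volume.restrict V] fun _ => 1)
    -- by (T1), 𝒯 maps ⟨1⟩⊥ into itself; 𝒯K is the restriction of 𝒯 to ⟨1⟩⊥
    (hinv : ∀ p ∈ (Submodule.span ℝ {one})ᗮ, 𝒯 p ∈ (Submodule.span ℝ {one})ᗮ)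
    (𝒯K : (Submodule.span ℝ {one})ᗮ →L[ℝ] (Submodule.span ℝ {one})ᗮ)
    (h𝒯K : 𝒯K = ContinuousLinearMap.codRestrict
      (𝒯.comp (Submodule.span ℝ {one})ᗮ.subtypeL) (Submodule.span ℝ {one})ᗮ
      (fun x => hinv x x.2))
    -- (T3)
    (hT3 : ‖𝒯K‖ < 1) :
    (0 < lam * (1 - ‖𝒯K‖)) ∧
    (∀ z : ℂ, z ≠ 0 →
      (∃ p : Lp ℂ 2 (volume.restrict V), p ≠ 0 ∧ 𝓛c p = z • p) →
      -2 * lam < z.re ∧ z.re ≤ -(lam * (1 - ‖𝒯K‖))) ∧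
    (∀ (r : ℝ) (f : Lp ℝ 2 (volume.restrict V)), 𝓛 f = r • f →
      (∀ᵐ v ∂(volume.restrict V), 0 ≤ (f : EuclideanSpace ℝ (Fin n) → ℝ) v) →
      ¬ ((f : EuclideanSpace ℝ (Fin n) → ℝ) =ᵐ[volume.restrict V] 0) →
      ∃ c : ℝ, f = c • one) :=
  turning_operator_spectral_gap_and_positive_eigenfunction_general n V hVc T hTmeas hT1_norm hT1_sq
    hT4 𝒯 𝓛 h𝒯 lam hlam h𝓛 𝒯c 𝓛c h𝒯c h𝓛c one hone hinv 𝒯K h𝒯K hT3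
end

section
/- Under assumption (T1), the Hilbert-space adjoint 𝓛* of the turning operator satisfies 𝓛*1 = 0, i.e. the constant function 1 is an eigenfunction of 𝓛* for the eigenvalue 0; if in addition (T2) and (T4) hold, then the kernel of 𝓛* is exactly the one-dimensional span of the constant function 1. Consequently, the equation 𝓛p = h with h ∈ L²(V) is solvable only if ∫_V h(v) dv = 0. -/
/-!
Column-stochasticity of `T` makes `𝒯` preserve `∫`, so `⟪𝓛 p, 1⟫ = λ (∫ 𝒯 p - ∫ p) = 0` for
every `p`; this gives `𝓛* 1 = 0` and the solvability condition. If `𝓛* q = 0`, testing against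
indicators shows `q = ∫ T(x, ·) q(x) dx` a.e. For a doubly stochastic kernel, `|q - c|` is again
such a fixed point when `c` is the mean of `q`, hence so are `|q - c| ± (q - c)`. The bounds
`η₀(x) φ(y) ≤ T(x, y) ≤ η₀(x) ψ(y)` squeeze a nonnegative fixed point `s` between
`φ ∫ η₀ s` and `ψ ∫ η₀ s`, so it vanishes a.e. or is positive a.e. The two parts cannot both be
positive, and `q - c` has mean zero, so `q = c`.
-/

open MeasureTheory
open scoped RealInnerProductSpace

lemma memLp_two_mul_prod {α β : Type*} [MeasurableSpace α] [MeasurableSpace β]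
    {μ : Measure α} {ν : Measure β} [SFinite ν] {f : α → ℝ} {g : β → ℝ}
    (hf : MemLp f 2 μ) (hg : MemLp g 2 ν) :
    MemLp (fun z : α × β => f z.1 * g z.2) 2 (μ.prod ν) := by
  refine (memLp_two_iff_integrable_sq ?_).2 ?_
  · exact (hf.1.comp_fst).mul hg.1.comp_snd
  · simpa only [mul_pow] using
      ((memLp_two_iff_integrable_sq hf.1).1 hf).mul_prod ((memLp_two_iff_integrable_sq hg.1).1 hg)

lemma ae_ae_swap_of_ae_prod {α β : Type*} [MeasurableSpace α] [MeasurableSpace β]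
    {μ : Measure α} {ν : Measure β} [SFinite μ] [SFinite ν] {p : α × β → Prop}
    (h : ∀ᵐ z ∂μ.prod ν, p z) : ∀ᵐ y ∂ν, ∀ᵐ x ∂μ, p (x, y) :=
  Measure.ae_ae_of_ae_prod (Measure.measurePreserving_swap.quasiMeasurePreserving.ae h)

namespace IntegralKernel

variable {α : Type*} [MeasurableSpace α] {μ : Measure α} {T : α → α → ℝ}

def IsTransposeFixed (μ : Measure α) (T : α → α → ℝ) (f : α → ℝ) : Prop :=
  ∀ᵐ y ∂μ, f y = ∫ x, T x y * f x ∂μ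

lemma isTransposeFixed_const (hcol : ∀ᵐ y ∂μ, ∫ x, T x y ∂μ = 1) (c : ℝ) :
    IsTransposeFixed μ T fun _ => c := by
  filter_upwards [hcol] with y hy
  rw [integral_mul_const, hy, one_mul]

variable [IsFiniteMeasure μ]

lemma integrable_mul_fst_mul_snd (hT : MemLp (Function.uncurry T) 2 (μ.prod μ)) {f g : α → ℝ}
    (hf : MemLp f 2 μ) (hg : MemLp g 2 μ) :
    Integrable (fun z : α × α => T z.1 z.2 * (f z.1 * g z.2)) (μ.prod μ) :=
  hT.integrable_mul (memLp_two_mul_prod hf hg)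

lemma integrable_mul_fst (hT : MemLp (Function.uncurry T) 2 (μ.prod μ)) {f : α → ℝ}
    (hf : MemLp f 2 μ) :
    Integrable (fun z : α × α => T z.1 z.2 * f z.1) (μ.prod μ) :=
  hT.integrable_mul (hf.comp_fst μ)

lemma ae_integrable_mul (hT : MemLp (Function.uncurry T) 2 (μ.prod μ)) {f : α → ℝ}
    (hf : MemLp f 2 μ) :
    ∀ᵐ y ∂μ, Integrable (fun x => T x y * f x) μ :=
  (integrable_mul_fst hT hf).swap.prod_right_ae

lemma integrable_integral_mul (hT : MemLp (Function.uncurry T) 2 (μ.prod μ)) {f : α → ℝ}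
    (hf : MemLp f 2 μ) :
    Integrable (fun y => ∫ x, T x y * f x ∂μ) μ :=
  (integrable_mul_fst hT hf).swap.integral_prod_left

lemma integral_integral_mul (hT : MemLp (Function.uncurry T) 2 (μ.prod μ))
    (hrow : ∀ᵐ x ∂μ, ∫ y, T x y ∂μ = 1) {f : α → ℝ} (hf : MemLp f 2 μ) :
    ∫ y, ∫ x, T x y * f x ∂μ ∂μ = ∫ x, f x ∂μ := by
  rw [← integral_integral_swap (f := fun x y => T x y * f x) (integrable_mul_fst hT hf)]
  refine integral_congr_ae ?_
  filter_upwards [hrow] with x hx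
  rw [integral_mul_const, hx, one_mul]

namespace IsTransposeFixed

variable {f g : α → ℝ}

lemma add (hf : IsTransposeFixed μ T f) (hg : IsTransposeFixed μ T g)
    (hT : MemLp (Function.uncurry T) 2 (μ.prod μ)) (hf2 : MemLp f 2 μ) (hg2 : MemLp g 2 μ) :
    IsTransposeFixed μ T (f + g) := by
  filter_upwards [hf, hg, ae_integrable_mul hT hf2, ae_integrable_mul hT hg2]
    with y hfy hgy hf_int hg_int
  simp only [Pi.add_apply, mul_add, integral_add hf_int hg_int, ← hfy, ← hgy]

lemma sub (hf : IsTransposeFixed μ T f) (hg : IsTransposeFixed μ T g)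
    (hT : MemLp (Function.uncurry T) 2 (μ.prod μ)) (hf2 : MemLp f 2 μ) (hg2 : MemLp g 2 μ) :
    IsTransposeFixed μ T (f - g) := by
  filter_upwards [hf, hg, ae_integrable_mul hT hf2, ae_integrable_mul hT hg2]
    with y hfy hgy hf_int hg_int
  simp only [Pi.sub_apply, mul_sub, integral_sub hf_int hg_int, ← hfy, ← hgy]

/-- For a stochastic kernel `|∫ T(x, y) f(x) dx| ≤ ∫ T(x, y) |f(x)| dx` pointwise, and both sides
have the same integral in `y`, so the inequality is an a.e. equality. -/
lemma abs (hf : IsTransposeFixed μ T f) (hT : MemLp (Function.uncurry T) 2 (μ.prod μ))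
    (hT0 : ∀ᵐ z ∂μ.prod μ, 0 ≤ T z.1 z.2) (hrow : ∀ᵐ x ∂μ, ∫ y, T x y ∂μ = 1)
    (hf2 : MemLp f 2 μ) :
    IsTransposeFixed μ T |f| := by
  have habs : MemLp |f| 2 μ := hf2.abs
  have hle : |f| ≤ᵐ[μ] fun y => ∫ x, T x y * |f x| ∂μ := by
    filter_upwards [hf, ae_ae_swap_of_ae_prod hT0] with y hy hTy
    calc |f y| = |∫ x, T x y * f x ∂μ| := by rw [← hy]
      _ ≤ ∫ x, |T x y * f x| ∂μ := abs_integral_le_integral_abs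
      _ = ∫ x, T x y * |f x| ∂μ := by
        refine integral_congr_ae ?_
        filter_upwards [hTy] with x hx
        rw [abs_mul, abs_of_nonneg hx]
  exact (integral_eq_iff_of_ae_le (habs.integrable one_le_two) (integrable_integral_mul hT habs)
    hle).1 (integral_integral_mul hT hrow habs).symm

lemma ae_bounds_of_kernel_bounds (hf : IsTransposeFixed μ T f)
    (hT : MemLp (Function.uncurry T) 2 (μ.prod μ)) {η₀ φ ψ : α → ℝ}
    (hbd : ∀ᵐ z ∂μ.prod μ, η₀ z.1 * φ z.2 ≤ T z.1 z.2 ∧ T z.1 z.2 ≤ η₀ z.1 * ψ z.2)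
    (hη : MemLp η₀ 2 μ) (hf2 : MemLp f 2 μ) (hf0 : 0 ≤ᵐ[μ] f) :
    ∀ᵐ y ∂μ, φ y * ∫ x, η₀ x * f x ∂μ ≤ f y ∧ f y ≤ ψ y * ∫ x, η₀ x * f x ∂μ := by
  have hηf : Integrable (fun x => η₀ x * f x) μ := hη.integrable_mul hf2
  filter_upwards [hf, ae_integrable_mul hT hf2, ae_ae_swap_of_ae_prod hbd] with y hy hint hbdy
  rw [← integral_const_mul, ← integral_const_mul, hy]
  constructor
  · refine integral_mono_ae (hηf.const_mul _) hint ?_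
    filter_upwards [hf0, hbdy] with x hx hb
    nlinarith [mul_le_mul_of_nonneg_right hb.1 hx]
  · refine integral_mono_ae hint (hηf.const_mul _) ?_
    filter_upwards [hf0, hbdy] with x hx hb
    nlinarith [mul_le_mul_of_nonneg_right hb.2 hx]

lemma ae_eq_zero_or_ae_pos (hf : IsTransposeFixed μ T f)
    (hT : MemLp (Function.uncurry T) 2 (μ.prod μ)) {η₀ φ ψ : α → ℝ}
    (hbd : ∀ᵐ z ∂μ.prod μ, η₀ z.1 * φ z.2 ≤ T z.1 z.2 ∧ T z.1 z.2 ≤ η₀ z.1 * ψ z.2)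
    (hη : MemLp η₀ 2 μ) (hη0 : ∀ᵐ x ∂μ, 0 ≤ η₀ x) (hφ : ∀ᵐ y ∂μ, 0 < φ y)
    (hf2 : MemLp f 2 μ) (hf0 : 0 ≤ᵐ[μ] f) :
    f =ᵐ[μ] 0 ∨ ∀ᵐ y ∂μ, 0 < f y := by
  have hbounds := hf.ae_bounds_of_kernel_bounds hT hbd hη hf2 hf0
  have hI : 0 ≤ ∫ x, η₀ x * f x ∂μ :=
    integral_nonneg_of_ae (by filter_upwards [hη0, hf0] with x h₁ h₂ using mul_nonneg h₁ h₂)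
  rcases hI.eq_or_lt with hI | hI
  · left
    filter_upwards [hbounds, hf0] with y hy hy0
    simp only [← hI, mul_zero] at hy
    exact le_antisymm hy.2 hy0
  · right
    filter_upwards [hbounds, hφ] with y hy hφy
    exact (mul_pos hφy hI).trans_le hy.1

lemma ae_eq_const (hf : IsTransposeFixed μ T f) (hT : MemLp (Function.uncurry T) 2 (μ.prod μ))
    (hT0 : ∀ᵐ z ∂μ.prod μ, 0 ≤ T z.1 z.2) (hcol : ∀ᵐ y ∂μ, ∫ x, T x y ∂μ = 1)
    (hrow : ∀ᵐ x ∂μ, ∫ y, T x y ∂μ = 1) {η₀ φ ψ : α → ℝ}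
    (hbd : ∀ᵐ z ∂μ.prod μ, η₀ z.1 * φ z.2 ≤ T z.1 z.2 ∧ T z.1 z.2 ≤ η₀ z.1 * ψ z.2)
    (hη : MemLp η₀ 2 μ) (hη0 : ∀ᵐ x ∂μ, 0 ≤ η₀ x) (hφ : ∀ᵐ y ∂μ, 0 < φ y) (hf2 : MemLp f 2 μ) :
    ∃ c : ℝ, f =ᵐ[μ] fun _ => c := by
  set c := ⨍ x, f x ∂μ
  set r := f - fun _ => c
  have hr2 : MemLp r 2 μ := hf2.sub (memLp_const c)
  have hr : IsTransposeFixed μ T r := hf.sub (isTransposeFixed_const hcol c) hT hf2 (memLp_const c)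
  have hr_int : ∫ x, r x ∂μ = 0 := integral_sub_average μ f
  have habs := hr.abs hT hT0 hrow hr2
  have hplus := (habs.add hr hT hr2.abs hr2).ae_eq_zero_or_ae_pos hT hbd hη hη0 hφ
    (hr2.abs.add hr2) (ae_of_all _ fun x => neg_le_iff_add_nonneg'.1 (neg_abs_le (r x)))
  have hminus := (habs.sub hr hT hr2.abs hr2).ae_eq_zero_or_ae_pos hT hbd hη hη0 hφ
    (hr2.abs.sub hr2) (ae_of_all _ fun x => sub_nonneg.2 (le_abs_self (r x)))
  refine ⟨c, ?_⟩
  suffices r =ᵐ[μ] 0 by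
    filter_upwards [this] with x hx
    exact sub_eq_zero.1 hx
  have hr_int' : ∫ x, r x ∂μ = ∫ x, (0 : α → ℝ) x ∂μ := by simpa using hr_int
  rcases hplus with hp | hp
  · refine (integral_eq_iff_of_ae_le (hr2.integrable one_le_two) (integrable_zero _ _ _) ?_).1
      hr_int'
    filter_upwards [hp] with x hx
    have := abs_nonneg (r x)
    simp only [Pi.add_apply, Pi.abs_apply, Pi.zero_apply] at hx ⊢
    linarith
  rcases hminus with hm | hm
  · refine ((integral_eq_iff_of_ae_le (integrable_zero _ _ _) (hr2.integrable one_le_two) ?_).1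
      hr_int'.symm).symm
    filter_upwards [hm] with x hx
    have := abs_nonneg (r x)
    simp only [Pi.sub_apply, Pi.abs_apply, Pi.zero_apply] at hx ⊢
    linarith
  filter_upwards [hp, hm] with x hx₁ hx₂
  simp only [Pi.add_apply, Pi.sub_apply, Pi.abs_apply] at hx₁ hx₂
  cases abs_cases (r x) <;> linarith

end IsTransposeFixed

def IsIntegralOperator (𝒯 : Lp ℝ 2 μ →L[ℝ] Lp ℝ 2 μ) (T : α → α → ℝ) : Prop :=
  ∀ p : Lp ℝ 2 μ, 𝒯 p =ᵐ[μ] fun x => ∫ y, T x y * p y ∂μ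

namespace IsIntegralOperator

variable {𝒯 : Lp ℝ 2 μ →L[ℝ] Lp ℝ 2 μ}

lemma integral_apply (h𝒯 : IsIntegralOperator 𝒯 T)
    (hT : MemLp (Function.uncurry T) 2 (μ.prod μ)) (hcol : ∀ᵐ x ∂μ, ∫ y, T y x ∂μ = 1)
    (p : Lp ℝ 2 μ) :
    ∫ x, 𝒯 p x ∂μ = ∫ x, p x ∂μ := by
  rw [integral_congr_ae (h𝒯 p)]
  exact integral_integral_mul (T := fun x y => T y x)
    (hT.comp_measurePreserving Measure.measurePreserving_swap) hcol (Lp.memLp p)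

lemma inner_apply (h𝒯 : IsIntegralOperator 𝒯 T)
    (hT : MemLp (Function.uncurry T) 2 (μ.prod μ)) (p q : Lp ℝ 2 μ) :
    ⟪𝒯 p, q⟫ = ∫ y, p y * ∫ x, T x y * q x ∂μ ∂μ := by
  calc ⟪𝒯 p, q⟫ = ∫ x, (∫ y, T x y * p y ∂μ) * q x ∂μ := by
        rw [L2.inner_def]
        refine integral_congr_ae ?_
        filter_upwards [h𝒯 p] with x hx
        simp [hx, mul_comm]
    _ = ∫ x, ∫ y, T x y * (q x * p y) ∂μ ∂μ := by
        congr 1 with x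
        rw [← integral_mul_const]
        congr 1 with y
        ring
    _ = ∫ y, ∫ x, T x y * (q x * p y) ∂μ ∂μ :=
        integral_integral_swap (integrable_mul_fst_mul_snd hT (Lp.memLp q) (Lp.memLp p))
    _ = ∫ y, p y * ∫ x, T x y * q x ∂μ ∂μ := by
        congr 1 with y
        rw [← integral_const_mul]
        congr 1 with x
        ring

lemma isTransposeFixed_of_inner (h𝒯 : IsIntegralOperator 𝒯 T)
    (hT : MemLp (Function.uncurry T) 2 (μ.prod μ)) {q : Lp ℝ 2 μ}
    (hq : ∀ p, ⟪𝒯 p, q⟫ = ⟪p, q⟫) :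
    IsTransposeFixed μ T q := by
  refine ((Lp.memLp q).integrable one_le_two).ae_eq_of_forall_setIntegral_eq _ _
    (integrable_integral_mul hT (Lp.memLp q)) fun s hs hμs => ?_
  rw [← L2.inner_indicatorConstLp_one hs hμs.ne q, ← hq, h𝒯.inner_apply hT,
    ← integral_indicator hs]
  refine integral_congr_ae ?_
  filter_upwards [indicatorConstLp_coeFn (p := 2) (hs := hs) (hμs := hμs.ne) (c := (1 : ℝ))]
    with y hy
  by_cases hys : y ∈ s <;> simp [hy, hys]

end IsIntegralOperator

end IntegralKernel

lemma real_inner_L2_eq_integral_of_ae_eq_one {α : Type*} [MeasurableSpace α] {μ : Measure α}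
    {one : Lp ℝ 2 μ} (hone : one =ᵐ[μ] fun _ => 1) (p : Lp ℝ 2 μ) :
    ⟪p, one⟫ = ∫ x, p x ∂μ := by
  rw [L2.inner_def]
  refine integral_congr_ae ?_
  filter_upwards [hone] with x hx
  simp [hx]

theorem turning_operator_adjoint_kernel_and_solvability_general
    (n : ℕ) (V : Set (EuclideanSpace ℝ (Fin n)))
    (hVc : IsCompact V)
    (T : EuclideanSpace ℝ (Fin n) → EuclideanSpace ℝ (Fin n) → ℝ)
    (hTmeas : Measurable (Function.uncurry T))
    -- (T1)
    (hT1_nonneg : ∀ᵐ z ∂((volume.restrict V).prod (volume.restrict V)), 0 ≤ T z.1 z.2)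
    (hT1_norm : ∀ᵐ v' ∂(volume.restrict V), ∫ v in V, T v v' = 1)
    (hT1_sq : Integrable (fun z => (T z.1 z.2) ^ 2)
      ((volume.restrict V).prod (volume.restrict V)))
    (𝒯 𝓛 : Lp ℝ 2 (volume.restrict V) →L[ℝ] Lp ℝ 2 (volume.restrict V))
    (h𝒯 : ∀ p : Lp ℝ 2 (volume.restrict V),
      (𝒯 p : EuclideanSpace ℝ (Fin n) → ℝ) =ᵐ[volume.restrict V]
        fun v => ∫ v' in V, T v v' * p v')
    (lam : ℝ) (hlam : 0 < lam)
    (h𝓛 : 𝓛 = lam • (𝒯 - ContinuousLinearMap.id ℝ (Lp ℝ 2 (volume.restrict V))))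
    -- the constant function 1 as an element of L²(V)
    (one : Lp ℝ 2 (volume.restrict V))
    (hone : (one : EuclideanSpace ℝ (Fin n) → ℝ) =ᵐ[volume.restrict V] fun _ => 1) :
    -- 𝓛* 1 = 0
    ContinuousLinearMap.adjoint 𝓛 one = 0 ∧
    -- under (T2) and (T4), ker 𝓛* = span {1}
    ((∃ η₀ φ ψ : EuclideanSpace ℝ (Fin n) → ℝ,
        MemLp η₀ 2 (volume.restrict V) ∧ MemLp φ 2 (volume.restrict V) ∧
        MemLp ψ 2 (volume.restrict V) ∧
        (∀ᵐ v ∂(volume.restrict V), 0 ≤ η₀ v) ∧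
        ¬ (η₀ =ᵐ[volume.restrict V] 0) ∧
        (∀ᵐ v ∂(volume.restrict V), 0 < φ v) ∧
        (∀ᵐ v ∂(volume.restrict V), 0 < ψ v) ∧
        (∀ᵐ z ∂((volume.restrict V).prod (volume.restrict V)),
          η₀ z.1 * φ z.2 ≤ T z.1 z.2 ∧ T z.1 z.2 ≤ η₀ z.1 * ψ z.2)) →
      (∀ᵐ v ∂(volume.restrict V), ∫ v' in V, T v v' = 1) →
      LinearMap.ker (ContinuousLinearMap.adjoint 𝓛).toLinearMap = Submodule.span ℝ {one}) ∧
    -- solvability requires zero mean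
    (∀ h : Lp ℝ 2 (volume.restrict V), (∃ p, 𝓛 p = h) →
      ∫ v in V, (h : EuclideanSpace ℝ (Fin n) → ℝ) v = 0) := by
  have : IsFiniteMeasure (volume.restrict V) := isFiniteMeasure_restrict.2 hVc.measure_lt_top.ne
  have hT : MemLp (Function.uncurry T) 2 ((volume.restrict V).prod (volume.restrict V)) :=
    (memLp_two_iff_integrable_sq hTmeas.aestronglyMeasurable).2 hT1_sq
  have h𝒯_op : IntegralKernel.IsIntegralOperator 𝒯 T := h𝒯
  have h𝒯_int := h𝒯_op.integral_apply hT hT1_norm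
  have hinner_one := real_inner_L2_eq_integral_of_ae_eq_one hone
  have h𝓛_inner : ∀ p q, ⟪𝓛 p, q⟫ = lam * (⟪𝒯 p, q⟫ - ⟪p, q⟫) := fun p q => by
    rw [h𝓛, smul_apply, sub_apply, ContinuousLinearMap.id_apply,
      real_inner_smul_left, inner_sub_left]
  have h𝓛_one : ∀ p, ⟪𝓛 p, one⟫ = 0 := fun p => by
    rw [h𝓛_inner, hinner_one, hinner_one, h𝒯_int,
      sub_self, mul_zero]
  have hadj_one : ContinuousLinearMap.adjoint 𝓛 one = 0 := ext_inner_left ℝ fun p => by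
    rw [ContinuousLinearMap.adjoint_inner_right, h𝓛_one, inner_zero_right]
  refine ⟨hadj_one, ?_, fun h ⟨p, hp⟩ => by rw [← hinner_one, ← hp, h𝓛_one]⟩
  rintro ⟨η₀, φ, ψ, hη, -, -, hη0, -, hφ, -, hbd⟩ hT4
  refine le_antisymm (fun q hq => ?_) ((Submodule.span_singleton_le_iff_mem _ _).2 hadj_one)
  have hfix : IntegralKernel.IsTransposeFixed _ T q :=
    h𝒯_op.isTransposeFixed_of_inner hT fun p => by
      have hq0 : ContinuousLinearMap.adjoint 𝓛 q = 0 := hq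
      have h := h𝓛_inner p q
      rw [← ContinuousLinearMap.adjoint_inner_right, hq0, inner_zero_right,
        eq_comm, mul_eq_zero, sub_eq_zero] at h
      exact h.resolve_left hlam.ne'
  obtain ⟨c, hc⟩ := hfix.ae_eq_const hT hT1_nonneg hT1_norm hT4 hbd hη hη0 hφ (Lp.memLp q)
  refine Submodule.mem_span_singleton.2 ⟨c, Lp.ext ?_⟩
  filter_upwards [Lp.coeFn_smul c one, hone, hc] with v hv hv1 hvc
  rw [hv, Pi.smul_apply, hv1, hvc, smul_eq_mul, mul_one]

/-- Under (T1), the adjoint `𝓛*` of the turning operator kills the constant function `1`;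
if in addition (T2) and (T4) hold, the kernel of `𝓛*` is exactly the span of `1`.
Consequently, `𝓛p = h` is solvable only if `∫_V h = 0`. -/
theorem turning_operator_adjoint_kernel_and_solvability
    (n : ℕ) (V : Set (EuclideanSpace ℝ (Fin n)))
    (hVc : IsCompact V) (hVpos : 0 < volume V)
    (T : EuclideanSpace ℝ (Fin n) → EuclideanSpace ℝ (Fin n) → ℝ)
    (hTmeas : Measurable (Function.uncurry T))
    -- (T1)
    (hT1_nonneg : ∀ᵐ z ∂((volume.restrict V).prod (volume.restrict V)), 0 ≤ T z.1 z.2)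
    (hT1_norm : ∀ᵐ v' ∂(volume.restrict V), ∫ v in V, T v v' = 1)
    (hT1_sq : Integrable (fun z => (T z.1 z.2) ^ 2)
      ((volume.restrict V).prod (volume.restrict V)))
    (𝒯 𝓛 : Lp ℝ 2 (volume.restrict V) →L[ℝ] Lp ℝ 2 (volume.restrict V))
    (h𝒯 : ∀ p : Lp ℝ 2 (volume.restrict V),
      (𝒯 p : EuclideanSpace ℝ (Fin n) → ℝ) =ᵐ[volume.restrict V]
        fun v => ∫ v' in V, T v v' * p v')
    (lam : ℝ) (hlam : 0 < lam)
    (h𝓛 : 𝓛 = lam • (𝒯 - ContinuousLinearMap.id ℝ (Lp ℝ 2 (volume.restrict V))))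
    -- the constant function 1 as an element of L²(V)
    (one : Lp ℝ 2 (volume.restrict V))
    (hone : (one : EuclideanSpace ℝ (Fin n) → ℝ) =ᵐ[volume.restrict V] fun _ => 1) :
    -- 𝓛* 1 = 0
    ContinuousLinearMap.adjoint 𝓛 one = 0 ∧
    -- under (T2) and (T4), ker 𝓛* = span {1}
    ((∃ η₀ φ ψ : EuclideanSpace ℝ (Fin n) → ℝ,
        MemLp η₀ 2 (volume.restrict V) ∧ MemLp φ 2 (volume.restrict V) ∧
        MemLp ψ 2 (volume.restrict V) ∧
        (∀ᵐ v ∂(volume.restrict V), 0 ≤ η₀ v) ∧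
        ¬ (η₀ =ᵐ[volume.restrict V] 0) ∧
        (∀ᵐ v ∂(volume.restrict V), 0 < φ v) ∧
        (∀ᵐ v ∂(volume.restrict V), 0 < ψ v) ∧
        (∀ᵐ z ∂((volume.restrict V).prod (volume.restrict V)),
          η₀ z.1 * φ z.2 ≤ T z.1 z.2 ∧ T z.1 z.2 ≤ η₀ z.1 * ψ z.2)) →
      (∀ᵐ v ∂(volume.restrict V), ∫ v' in V, T v v' = 1) →
      LinearMap.ker (ContinuousLinearMap.adjoint 𝓛).toLinearMap = Submodule.span ℝ {one}) ∧
    -- solvability requires zero mean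
    (∀ h : Lp ℝ 2 (volume.restrict V), (∃ p, 𝓛 p = h) →
      ∫ v in V, (h : EuclideanSpace ℝ (Fin n) → ℝ) v = 0) :=
  turning_operator_adjoint_kernel_and_solvability_general n V hVc T hTmeas hT1_nonneg hT1_norm
    hT1_sq 𝒯 𝓛 h𝒯 lam hlam h𝓛 one hone
end

section
/- (Lemma: regular reflection boundary operators satisfy the no normal mass flux condition.) Let p : V → ℝ be measurable with v ↦ p(v)(v·ν) integrable on V, and suppose p satisfies the regular reflection boundary condition p(v) = p(𝒱(v)) for a.e. v ∈ V⁻. Then ∫_V p(v) (v·ν) dv = 0. -/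
open MeasureTheory
open scoped RealInnerProductSpace

/-- (Regular reflection boundary operators satisfy the no normal mass flux condition.)
If `𝒱` is a regular reflection map (in the sense of Palczewski) from
`V⁻ = {v ∈ V : v·ν < 0}` onto `V⁺ = {v ∈ V : v·ν > 0}` and the measurable function `p`
satisfies the reflection boundary condition `p(v) = p(𝒱 v)` a.e. on `V⁻`, then
`∫_V p(v) (v·ν) dv = 0`. -/
theorem regular_reflection_no_normal_mass_flux
    (n : ℕ) (V : Set (EuclideanSpace ℝ (Fin n)))
    (hVc : IsCompact V) (hVpos : 0 < volume V)
    (ν : EuclideanSpace ℝ (Fin n)) (hν : ‖ν‖ = 1)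
    -- the set {v ∈ V : v·ν = 0} is Lebesgue-null
    (hnull : volume {v ∈ V | ⟪v, ν⟫ = 0} = 0)
    -- the regular reflection map and its derivative
    (𝒱 : EuclideanSpace ℝ (Fin n) → EuclideanSpace ℝ (Fin n))
    (D : EuclideanSpace ℝ (Fin n) →
      (EuclideanSpace ℝ (Fin n) →L[ℝ] EuclideanSpace ℝ (Fin n)))
    -- 𝒱 is a C¹ diffeomorphism of V⁻ onto V⁺
    (hbij : Set.BijOn 𝒱 {v ∈ V | ⟪v, ν⟫ < 0} {v ∈ V | 0 < ⟪v, ν⟫})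
    (hderiv : ∀ v ∈ {v ∈ V | ⟪v, ν⟫ < 0},
      HasFDerivWithinAt 𝒱 (D v) {v ∈ V | ⟪v, ν⟫ < 0} v)
    (hD_cont : ContinuousOn D {v ∈ V | ⟪v, ν⟫ < 0})
    -- the Jacobian condition |ν·v| = |ν·𝒱(v)|·|det D𝒱(v)| on V⁻
    (hjac : ∀ v ∈ {v ∈ V | ⟪v, ν⟫ < 0},
      |⟪v, ν⟫| = |⟪𝒱 v, ν⟫| * |(D v).det|)
    -- the population density
    (p : EuclideanSpace ℝ (Fin n) → ℝ) (hp_meas : Measurable p)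
    (hp_int : IntegrableOn (fun v => p v * ⟪v, ν⟫) V volume)
    -- the regular reflection boundary condition: p(v) = p(𝒱 v) for a.e. v ∈ V⁻
    (hbc : ∀ᵐ v ∂(volume.restrict {v ∈ V | ⟪v, ν⟫ < 0}), p v = p (𝒱 v)) :
    ∫ v in V, p v * ⟪v, ν⟫ = 0 := by
  classical
  set f : EuclideanSpace ℝ (Fin n) → ℝ := fun v => p v * ⟪v, ν⟫ with hf
  set Sm : Set (EuclideanSpace ℝ (Fin n)) := {v ∈ V | ⟪v, ν⟫ < 0} with hSm
  set Sp : Set (EuclideanSpace ℝ (Fin n)) := {v ∈ V | 0 < ⟪v, ν⟫} with hSp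
  have hVm : MeasurableSet V := hVc.isClosed.measurableSet
  have hcont : Continuous fun v : EuclideanSpace ℝ (Fin n) => ⟪v, ν⟫ :=
    continuous_inner.comp (continuous_id.prodMk continuous_const)
  have hSmm : MeasurableSet Sm := hVm.inter (measurableSet_lt hcont.measurable measurable_const)
  have hSpm : MeasurableSet Sp := hVm.inter (measurableSet_lt measurable_const hcont.measurable)
  -- V is a.e. equal to Sm ∪ Sp
  have haeeq : (Sm ∪ Sp : Set _) =ᵐ[volume] V := by
    rw [MeasureTheory.ae_eq_set]
    constructor
    · have : (Sm ∪ Sp) \ V = ∅ := by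
        ext v; simp only [Set.mem_diff, Set.mem_union, Set.mem_empty_iff_false, iff_false]
        rintro ⟨h1 | h1, h2⟩ <;> exact h2 h1.1
      simp [this]
    · refine measure_mono_null (fun v hv => ?_) hnull
      obtain ⟨hvV, hv2⟩ := hv
      refine ⟨hvV, ?_⟩
      by_contra h
      rcases lt_or_gt_of_ne h with h' | h'
      · exact hv2 (Or.inl ⟨hvV, h'⟩)
      · exact hv2 (Or.inr ⟨hvV, h'⟩)
  have himg : 𝒱 '' Sm = Sp := hbij.image_eq
  -- change of variables
  have hcov : ∫ v in Sp, f v = ∫ v in Sm, |(D v).det| • f (𝒱 v) := by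
    rw [← himg]
    exact MeasureTheory.integral_image_eq_integral_abs_det_fderiv_smul volume hSmm hderiv
      hbij.injOn f
  -- pointwise a.e. identity on Sm
  have hpt : ∀ᵐ v ∂(volume.restrict Sm), |(D v).det| • f (𝒱 v) = -f v := by
    filter_upwards [hbc, MeasureTheory.ae_restrict_mem hSmm] with v hpv hvSm
    have hvneg : ⟪v, ν⟫ < 0 := hvSm.2
    have h𝒱 : 𝒱 v ∈ Sp := hbij.mapsTo hvSm
    have hpos : 0 < ⟪𝒱 v, ν⟫ := h𝒱.2
    have hj := hjac v hvSm
    rw [abs_of_neg hvneg, abs_of_pos hpos] at hj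
    have key : ⟪𝒱 v, ν⟫ * |(D v).det| = -⟪v, ν⟫ := hj.symm
    simp only [hf, smul_eq_mul]
    rw [← hpv]
    linear_combination p v * key
  have hcov2 : ∫ v in Sp, f v = - ∫ v in Sm, f v := by
    rw [hcov, MeasureTheory.integral_congr_ae hpt, MeasureTheory.integral_neg]
  -- integrability
  have hintm : IntegrableOn f Sm volume := hp_int.mono_set (fun v hv => hv.1)
  have hintp : IntegrableOn f Sp volume := hp_int.mono_set (fun v hv => hv.1)
  have hdisj : Disjoint Sm Sp := by
    rw [Set.disjoint_left]
    rintro v ⟨_, h1⟩ ⟨_, h2⟩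
    exact absurd h1 (not_lt.2 h2.le)
  calc ∫ v in V, f v = ∫ v in Sm ∪ Sp, f v :=
        (MeasureTheory.setIntegral_congr_set haeeq).symm
    _ = (∫ v in Sm, f v) + ∫ v in Sp, f v :=
        MeasureTheory.setIntegral_union hdisj hSpm hintm hintp
    _ = 0 := by rw [hcov2]; ring
end
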